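/- Assume V(t,·), A(t,·) are smooth with, for constants: C0·⟨x⟩^{2(M+1)} − C1 ≤ V(t,x) ≤ C2·⟨x⟩^{2(M+1)} (C0, C2 > 0); |∂_x^α V(t,x)| ≤ C_α·⟨x⟩^{2(M+1)} for |α| ≥ 1; |A(t,x)| ≤ C·⟨x⟩^{M+1−δ} (δ > 0); |∂_x^α A_j(t,x)| ≤ C_α·⟨x⟩^{M+1} for |α| ≥ 1. Suppose μ ∈ ℝ and c > 0 satisfy μ + h(t,x,ξ) ≥ c·(⟨ξ⟩² + ⟨x⟩^{2(M+1)}) for all (t,x,ξ). Let χ be a Schwartz function on ℝ and set χ_ε(t,x,ξ) = χ(ε(μ + h(t,x,ξ))) for 0 < ε ≤ 1. Then for all multi-indices α, β, γ with |γ| = 2 there is C_{αβ} with sup_{0<ε≤1} |∂_ξ^{α+γ} ∂_x^β χ_ε(t,x,ξ)| ≤ C_{αβ}·(⟨ξ⟩² + ⟨x⟩^{2(M+1)})^{-1} for all (t,x,ξ) ∈ [0,T]×ℝ^{2d}. (Estimate (3.21) in the proof of Lemma 3.4.) -/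

import Mathlib

noncomputable section
open Real Set
open scoped RealInnerProductSpace



noncomputable section
open Real Set

/-- The Japanese bracket `⟨x⟩ = (1 + ‖x‖²)^{1/2}`. -/
def jap {E : Type*} [NormedAddCommGroup E] (x : E) : ℝ := Real.sqrt (1 + ‖x‖ ^ 2)

/-- The classical Hamiltonian `h(t,x,ξ) = (1/(2m))|ξ − A(t,x)|² + V(t,x)`. -/
def hcl {d : ℕ} (m : ℝ) (V : ℝ → EuclideanSpace ℝ (Fin d) → ℝ)
    (A : ℝ → EuclideanSpace ℝ (Fin d) → EuclideanSpace ℝ (Fin d))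
    (t : ℝ) (x ξ : EuclideanSpace ℝ (Fin d)) : ℝ :=
  (1/(2*m)) * ‖ξ - A t x‖ ^ 2 + V t x

/-- The coordinate directions in `ℝ^d × ℝ^d`: `Sum.inl j` is the `x_j`-direction,
`Sum.inr j` the `ξ_j`-direction. -/
def pdir (d : ℕ) : Fin d ⊕ Fin d → EuclideanSpace ℝ (Fin d) × EuclideanSpace ℝ (Fin d)
  | Sum.inl j => (EuclideanSpace.single j 1, 0)
  | Sum.inr j => (0, EuclideanSpace.single j 1)


namespace Stmt14Aux


variable {E : Type*} [NormedAddCommGroup E]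

lemma sq_jap (x : E) : jap x ^ 2 = 1 + ‖x‖^2 := Real.sq_sqrt (by positivity)

lemma jap_nonneg (x : E) : 0 ≤ jap x := Real.sqrt_nonneg _

lemma one_le_jap (x : E) : 1 ≤ jap x := by
  have h := sq_jap x
  nlinarith [jap_nonneg x, sq_nonneg ‖x‖]

lemma jap_pos (x : E) : 0 < jap x := lt_of_lt_of_le one_pos (one_le_jap x)

lemma norm_le_jap (x : E) : ‖x‖ ≤ jap x := by
  have h := sq_jap x
  nlinarith [jap_nonneg x, norm_nonneg x]

/-- Faà di Bruno for iterated derivatives of smooth functions. -/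
theorem iteratedFDeriv_comp_faa {X Y Z : Type*} [NormedAddCommGroup X] [NormedSpace ℝ X]
    [NormedAddCommGroup Y] [NormedSpace ℝ Y] [NormedAddCommGroup Z] [NormedSpace ℝ Z]
    {g : Y → Z} {f : X → Y} (hg : ContDiff ℝ (⊤:ℕ∞) g) (hf : ContDiff ℝ (⊤:ℕ∞) f)
    (n : ℕ) (x : X) :
    iteratedFDeriv ℝ n (g ∘ f) x =
      ∑ c : OrderedFinpartition n,
        (ftaylorSeries ℝ g (f x)).compAlongOrderedFinpartition (ftaylorSeries ℝ f x) c := by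
  have hg' := contDiff_iff_ftaylorSeries.mp hg
  have hf' := contDiff_iff_ftaylorSeries.mp hf
  have h := (hasFTaylorSeriesUpToOn_univ_iff.mpr hg').comp
      (hasFTaylorSeriesUpToOn_univ_iff.mpr hf') (mapsTo_univ _ _)
  have h2 := (hasFTaylorSeriesUpToOn_univ_iff.mp h).eq_iteratedFDeriv (m := n)
      (by exact_mod_cast le_top) x
  rw [← h2]; rfl

/-- High iterated derivatives of a continuous linear map vanish. -/
lemma clm_iteratedFDeriv_hi {X Y : Type*} [NormedAddCommGroup X] [NormedSpace ℝ X]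
    [NormedAddCommGroup Y] [NormedSpace ℝ Y] (L : X →L[ℝ] Y) {k : ℕ} (hk : 2 ≤ k)
    (x : X) (v : Fin k → X) : iteratedFDeriv ℝ k (⇑L) x v = 0 := by
  obtain ⟨j, rfl⟩ : ∃ j, k = j + 1 := ⟨k - 1, by omega⟩
  rw [iteratedFDeriv_succ_apply_right]
  have h1 : (fun y : X => fderiv ℝ (⇑L) y) = fun _ => L := by
    funext y; exact L.fderiv
  rw [h1, iteratedFDeriv_const_of_ne (by omega)]
  simp


variable {F : Type*} [NormedAddCommGroup F] [InnerProductSpace ℝ F]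

variable (m : ℝ) (hm : 0 < m)

lemma Qsmooth : ContDiff ℝ (⊤:ℕ∞) (fun y : F => (1/(2*m)) * ‖y‖^2) :=
  contDiff_const.mul (contDiff_norm_sq ℝ)

lemma fderivQ (hm : 0 < m) : (fun y : F => fderiv ℝ (fun z : F => (1/(2*m)) * ‖z‖^2) y)
    = ⇑((1/m) • (innerSL ℝ : F →L[ℝ] F →L[ℝ] ℝ)) := by
  funext y
  have h : HasFDerivAt (fun z : F => (1/(2*m)) * ‖z‖^2)
      ((1/(2*m)) • (2 • (innerSL ℝ y))) y :=
    ((hasStrictFDerivAt_norm_sq y).hasFDerivAt).const_mul (1/(2*m))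
  rw [h.fderiv]
  ext z
  simp only [ContinuousLinearMap.smul_apply, ContinuousLinearMap.coe_smul', Pi.smul_apply,
    smul_eq_mul]
  field_simp
  ring

lemma Q1 (hm : 0 < m) (y : F) (v : Fin 1 → F) :
    iteratedFDeriv ℝ 1 (fun z : F => (1/(2*m)) * ‖z‖^2) y v = (1/m) * ⟪y, v 0⟫ := by
  rw [iteratedFDeriv_one_apply]
  have := congrFun (fderivQ m hm (F := F)) y
  rw [this]
  simp [smul_eq_mul]

lemma Q2 (hm : 0 < m) (y : F) (v : Fin 2 → F) :
    iteratedFDeriv ℝ 2 (fun z : F => (1/(2*m)) * ‖z‖^2) y v = (1/m) * ⟪v 0, v 1⟫ := by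
  rw [iteratedFDeriv_succ_apply_right, fderivQ m hm]
  have h1 : iteratedFDeriv ℝ 1 (⇑((1/m) • (innerSL ℝ : F →L[ℝ] F →L[ℝ] ℝ))) y (Fin.init v)
      = ((1/m) • (innerSL ℝ : F →L[ℝ] F →L[ℝ] ℝ)) (Fin.init v 0) := by
    rw [iteratedFDeriv_one_apply, ContinuousLinearMap.fderiv]
  rw [h1]
  have h2 : Fin.init v 0 = v 0 := by simp [Fin.init]
  rw [h2, show Fin.last 1 = 1 from rfl]
  simp [smul_eq_mul]

lemma Q3 (hm : 0 < m) {k : ℕ} (hk : 3 ≤ k) (y : F) (v : Fin k → F) :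
    iteratedFDeriv ℝ k (fun z : F => (1/(2*m)) * ‖z‖^2) y v = 0 := by
  obtain ⟨j, rfl⟩ : ∃ j, k = j + 2 := ⟨k - 2, by omega⟩
  rw [iteratedFDeriv_succ_apply_right, fderivQ m hm]
  rw [clm_iteratedFDeriv_hi _ (by omega)]
  simp



lemma euclid_norm_le {d : ℕ} (u : EuclideanSpace ℝ (Fin d)) (C : ℝ) (hC : 0 ≤ C)
    (h : ∀ j, |u j| ≤ C) : ‖u‖ ≤ Real.sqrt d * C := by
  rw [EuclideanSpace.norm_eq]
  have h1 : ∑ j, ‖u j‖^2 ≤ (d : ℝ) * C^2 := by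
    calc ∑ j, ‖u j‖^2 ≤ ∑ _j : Fin d, C^2 := by
          apply Finset.sum_le_sum
          intro j _
          rw [Real.norm_eq_abs]
          calc |u j|^2 ≤ C^2 := by nlinarith [h j, abs_nonneg (u j)]
            _ = C^2 := rfl
      _ = (d : ℝ) * C^2 := by simp [Finset.sum_const, mul_comm]
  calc Real.sqrt (∑ j, ‖u j‖^2) ≤ Real.sqrt ((d:ℝ) * C^2) := Real.sqrt_le_sqrt h1
    _ = Real.sqrt d * C := by
        rw [Real.sqrt_mul (by positivity), Real.sqrt_sq hC]

lemma vec_iFD_coord {d k : ℕ} (A : EuclideanSpace ℝ (Fin d) → EuclideanSpace ℝ (Fin d))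
    (hA : ContDiff ℝ (⊤:ℕ∞) A) (x : EuclideanSpace ℝ (Fin d))
    (w : Fin k → EuclideanSpace ℝ (Fin d)) (j : Fin d) :
    iteratedFDeriv ℝ k A x w j = iteratedFDeriv ℝ k (fun y => A y j) x w := by
  have h := ContinuousLinearMap.iteratedFDeriv_comp_left (𝕜 := ℝ)
      (EuclideanSpace.proj j) (hA.contDiffAt (x := x)) (i := k) (by exact_mod_cast le_top)
  have h2 : (fun y => A y j) = ⇑(EuclideanSpace.proj (𝕜 := ℝ) j) ∘ A := rfl
  rw [h2, h]
  rfl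



section Gpiece
variable {d : ℕ}
local notation "E" => EuclideanSpace ℝ (Fin d)

lemma Vpart_iFD {k : ℕ} (V : E → ℝ) (hV : ContDiff ℝ (⊤:ℕ∞) V) (q : E × E)
    (v : Fin k → E × E) :
    iteratedFDeriv ℝ k (fun p : E × E => V p.1) q v
      = iteratedFDeriv ℝ k V q.1 (fun i => (v i).1) := by
  have h := ContinuousLinearMap.iteratedFDeriv_comp_right (𝕜 := ℝ)
      (ContinuousLinearMap.fst ℝ E E) hV q (i := k) (by exact_mod_cast le_top)
  have h2 : (fun p : E × E => V p.1) = V ∘ ⇑(ContinuousLinearMap.fst ℝ E E) := rfl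
  rw [h2, h, ContinuousMultilinearMap.compContinuousLinearMap_apply]
  rfl

lemma Apart_iFD {k : ℕ} (A : E → E) (hA : ContDiff ℝ (⊤:ℕ∞) A) (q : E × E)
    (v : Fin k → E × E) :
    iteratedFDeriv ℝ k (fun p : E × E => A p.1) q v
      = iteratedFDeriv ℝ k A q.1 (fun i => (v i).1) := by
  have h := ContinuousLinearMap.iteratedFDeriv_comp_right (𝕜 := ℝ)
      (ContinuousLinearMap.fst ℝ E E) hA q (i := k) (by exact_mod_cast le_top)
  have h2 : (fun p : E × E => A p.1) = A ∘ ⇑(ContinuousLinearMap.fst ℝ E E) := rfl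
  rw [h2, h, ContinuousMultilinearMap.compContinuousLinearMap_apply]
  rfl

lemma G_iFD_one (A : E → E) (hA : ContDiff ℝ (⊤:ℕ∞) A) (q : E × E) (v : Fin 1 → E × E) :
    iteratedFDeriv ℝ 1 (fun p : E × E => p.2 - A p.1) q v
      = (v 0).2 - iteratedFDeriv ℝ 1 A q.1 (fun i => (v i).1) := by
  have hsub : (fun p : E × E => p.2 - A p.1)
      = fun p : E × E => (ContinuousLinearMap.snd ℝ E E) p + -(A p.1) := by
    funext p; simp [sub_eq_add_neg]
  have hg : ContDiff ℝ (↑(1:ℕ)) (fun p : E × E => -(A p.1)) := by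
    exact ((hA.comp contDiff_fst)).neg.of_le (by exact_mod_cast le_top)
  rw [hsub, iteratedFDeriv_add_apply' (f := fun p : E × E => (ContinuousLinearMap.snd ℝ E E) p)
    (g := fun p : E × E => -(A p.1)) (ContinuousLinearMap.snd ℝ E E).contDiff.contDiffAt hg.contDiffAt]
  have h1 : iteratedFDeriv ℝ 1 (⇑(ContinuousLinearMap.snd ℝ E E)) q v = (v 0).2 := by
    rw [iteratedFDeriv_one_apply, ContinuousLinearMap.fderiv]; rfl
  have h2 : iteratedFDeriv ℝ 1 (fun p : E × E => -(A p.1)) q v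
      = - iteratedFDeriv ℝ 1 A q.1 (fun i => (v i).1) := by
    have hneg : (fun p : E × E => -(A p.1)) = -(fun p : E × E => A p.1) := rfl
    rw [hneg, iteratedFDeriv_neg_apply, ContinuousMultilinearMap.neg_apply, Apart_iFD A hA]
  rw [ContinuousMultilinearMap.add_apply, h1, h2, sub_eq_add_neg]

lemma G_iFD_hi {k : ℕ} (hk : 2 ≤ k) (A : E → E) (hA : ContDiff ℝ (⊤:ℕ∞) A) (q : E × E)
    (v : Fin k → E × E) :
    iteratedFDeriv ℝ k (fun p : E × E => p.2 - A p.1) q v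
      = - iteratedFDeriv ℝ k A q.1 (fun i => (v i).1) := by
  have hsub : (fun p : E × E => p.2 - A p.1)
      = fun p : E × E => (ContinuousLinearMap.snd ℝ E E) p + -(A p.1) := by
    funext p; simp [sub_eq_add_neg]
  have hg : ContDiff ℝ (↑k) (fun p : E × E => -(A p.1)) := by
    exact ((hA.comp contDiff_fst)).neg.of_le (by exact_mod_cast le_top)
  rw [hsub, iteratedFDeriv_add_apply' (f := fun p : E × E => (ContinuousLinearMap.snd ℝ E E) p)
    (g := fun p : E × E => -(A p.1)) (ContinuousLinearMap.snd ℝ E E).contDiff.contDiffAt hg.contDiffAt]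
  have h2 : iteratedFDeriv ℝ k (fun p : E × E => -(A p.1)) q v
      = - iteratedFDeriv ℝ k A q.1 (fun i => (v i).1) := by
    have hneg : (fun p : E × E => -(A p.1)) = -(fun p : E × E => A p.1) := rfl
    rw [hneg, iteratedFDeriv_neg_apply, ContinuousMultilinearMap.neg_apply, Apart_iFD A hA]
  rw [ContinuousMultilinearMap.add_apply, h2, clm_iteratedFDeriv_hi _ hk, zero_add]

end Gpiece

end Stmt14Aux

namespace Stmt14Aux

lemma Qbound {F : Type*} [NormedAddCommGroup F] [InnerProductSpace ℝ F]
    (m : ℝ) (hm : 0 < m) {k : ℕ} (hk1 : 1 ≤ k) (hk2 : k ≤ 2) (y : F) (U : Fin k → F) :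
    |iteratedFDeriv ℝ k (fun z : F => (1/(2*m)) * ‖z‖^2) y U|
      ≤ (1/m) * ‖y‖^(2-k) * ∏ i, ‖U i‖ := by
  interval_cases k
  · rw [Q1 m hm]
    have h := abs_real_inner_le_norm y (U 0)
    rw [abs_mul, abs_of_pos (by positivity : (0:ℝ) < 1/m)]
    have hprod : ∏ i : Fin 1, ‖U i‖ = ‖U 0‖ := by simp
    rw [hprod]
    calc (1/m) * |⟪y, U 0⟫| ≤ (1/m) * (‖y‖ * ‖U 0‖) := by
          apply mul_le_mul_of_nonneg_left h (by positivity)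
      _ = (1/m) * ‖y‖^(2-1) * ‖U 0‖ := by norm_num; ring
  · rw [Q2 m hm]
    have h := abs_real_inner_le_norm (U 0) (U 1)
    rw [abs_mul, abs_of_pos (by positivity : (0:ℝ) < 1/m)]
    have hprod : ∏ i : Fin 2, ‖U i‖ = ‖U 0‖ * ‖U 1‖ := by
      rw [Fin.prod_univ_two]
    rw [hprod]
    calc (1/m) * |⟪U 0, U 1⟫| ≤ (1/m) * (‖U 0‖ * ‖U 1‖) := by
          apply mul_le_mul_of_nonneg_left h (by positivity)
      _ = (1/m) * ‖y‖^(2-2) * (‖U 0‖ * ‖U 1‖) := by norm_num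

section GB
variable {d : ℕ}
local notation "E" => EuclideanSpace ℝ (Fin d)

lemma Gblock {k : ℕ} (hk : 1 ≤ k) (A : E → E) (hA : ContDiff ℝ (⊤:ℕ∞) A)
    (q : E × E) (w' : Fin k → Fin d ⊕ Fin d) (B : ℝ) (hB : 0 ≤ B)
    (hAd : ∀ v : Fin k → Fin d, ∀ j : Fin d,
      |iteratedFDeriv ℝ k (fun y => A y j) q.1 (fun i => EuclideanSpace.single (v i) 1)| ≤ B) :
    ((∀ j, ¬ (w' j).isRight = true) →
        ‖iteratedFDeriv ℝ k (fun p : E × E => p.2 - A p.1) q (fun i => pdir d (w' i))‖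
          ≤ Real.sqrt d * B)
    ∧ ((∃ j, (w' j).isRight = true) → 2 ≤ k →
        iteratedFDeriv ℝ k (fun p : E × E => p.2 - A p.1) q (fun i => pdir d (w' i)) = 0)
    ∧ (k = 1 → (∃ j, (w' j).isRight = true) →
        ‖iteratedFDeriv ℝ k (fun p : E × E => p.2 - A p.1) q (fun i => pdir d (w' i))‖ ≤ 1) := by
  have hAnorm : (∀ j, ¬ (w' j).isRight = true) →
      ‖iteratedFDeriv ℝ k A q.1 (fun i => (pdir d (w' i)).1)‖ ≤ Real.sqrt d * B := by
    intro hall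
    have hvec : (fun i => (pdir d (w' i)).1)
        = fun i => EuclideanSpace.single (Sum.elim id id (w' i)) (1:ℝ) := by
      funext i
      rcases hwi : w' i with j | j
      · rfl
      · exact absurd (by rw [hwi]; rfl) (hall i)
    rw [hvec]
    apply euclid_norm_le _ B hB
    intro j
    rw [vec_iFD_coord A hA]
    exact hAd _ j
  refine ⟨?_, ?_, ?_⟩
  · intro hall
    obtain ⟨k', rfl⟩ : ∃ k', k = k' + 1 := ⟨k - 1, by omega⟩
    rcases Nat.eq_zero_or_pos k' with rfl | hk'
    · rw [G_iFD_one A hA]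
      have h0 : (pdir d (w' 0)).2 = 0 := by
        rcases hwi : w' 0 with j | j
        · rfl
        · exact absurd (by rw [hwi]; rfl) (hall 0)
      rw [h0, zero_sub, norm_neg]
      exact hAnorm hall
    · rw [G_iFD_hi (by omega) A hA, norm_neg]
      exact hAnorm hall
  · rintro ⟨j0, hj0⟩ hk2
    rw [G_iFD_hi hk2 A hA]
    have h0 : (pdir d (w' j0)).1 = 0 := by
      rcases hwi : w' j0 with j | j
      · rw [hwi] at hj0; exact absurd hj0 (by simp)
      · rfl
    rw [ContinuousMultilinearMap.map_coord_zero _ j0 h0, neg_zero]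
  · rintro rfl ⟨j0, hj0⟩
    rw [G_iFD_one A hA]
    have hj0' : j0 = 0 := Subsingleton.elim _ _
    rw [hj0'] at hj0
    obtain ⟨j, hj⟩ := Sum.isRight_iff.mp hj0
    have h0 : (pdir d (w' 0)).1 = 0 := by rw [hj]; rfl
    rw [ContinuousMultilinearMap.map_coord_zero _ 0 h0, sub_zero, hj]
    have : (pdir d (Sum.inr j : Fin d ⊕ Fin d)).2 = EuclideanSpace.single j (1:ℝ) := rfl
    rw [this, EuclideanSpace.norm_single]
    simp

end GB
end Stmt14Aux
namespace Stmt14Aux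
section Stage1
variable {d : ℕ}
local notation "E" => EuclideanSpace ℝ (Fin d)

theorem stage1 (T m M μ : ℝ) (hm : 0 < m)
    (V : ℝ → E → ℝ) (A : ℝ → E → E)
    (hVsmooth : ∀ t ∈ Icc (0:ℝ) T, ContDiff ℝ (⊤ : ℕ∞) (V t))
    (hAsmooth : ∀ t ∈ Icc (0:ℝ) T, ContDiff ℝ (⊤ : ℕ∞) (A t))
    (CA δ : ℝ) (hδ : 0 < δ)
    (hVderiv : ∀ n : ℕ, 1 ≤ n → ∃ C : ℝ, ∀ t ∈ Icc (0:ℝ) T, ∀ x, ∀ v : Fin n → Fin d,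
      |iteratedFDeriv ℝ n (V t) x (fun i => EuclideanSpace.single (v i) 1)|
        ≤ C * jap x ^ (2*(M+1)))
    (hAbd : ∀ t ∈ Icc (0:ℝ) T, ∀ x, ‖A t x‖ ≤ CA * jap x ^ (M+1-δ))
    (hAderiv : ∀ n : ℕ, 1 ≤ n → ∃ C : ℝ, ∀ t ∈ Icc (0:ℝ) T, ∀ x,
      ∀ v : Fin n → Fin d, ∀ j : Fin d,
      |iteratedFDeriv ℝ n (fun y => A t y j) x (fun i => EuclideanSpace.single (v i) 1)|
        ≤ C * jap x ^ (M+1))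
    (n : ℕ) (hn : 1 ≤ n) :
    ∃ C : ℝ, 0 ≤ C ∧ ∀ t ∈ Icc (0:ℝ) T, ∀ q : E × E, ∀ w : Fin n → Fin d ⊕ Fin d,
      ‖iteratedFDeriv ℝ n (fun p : E × E => μ + hcl m V A t p.1 p.2) q (fun i => pdir d (w i))‖ ≤
        C * Real.sqrt (jap q.2 ^ 2 + jap q.1 ^ (2*(M+1))) ^
          (2 - (Finset.univ.filter fun i => (w i).isRight).card) := by
  classical
  -- uniform constants
  have hAc : ∀ k : ℕ, ∃ Ck : ℝ, 0 ≤ Ck ∧ (1 ≤ k → ∀ t ∈ Icc (0:ℝ) T, ∀ x,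
      ∀ v : Fin k → Fin d, ∀ j : Fin d,
      |iteratedFDeriv ℝ k (fun y => A t y j) x (fun i => EuclideanSpace.single (v i) 1)|
        ≤ Ck * jap x ^ (M+1)) := by
    intro k
    by_cases h : 1 ≤ k
    · obtain ⟨C, hC⟩ := hAderiv k h
      refine ⟨max C 0, le_max_right _ _, fun _ t ht x v j => ?_⟩
      exact le_trans (hC t ht x v j) (mul_le_mul_of_nonneg_right (le_max_left _ _)
        (le_of_lt (Real.rpow_pos_of_pos (jap_pos x) _)))
    · exact ⟨0, le_rfl, fun hk => absurd hk h⟩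
  choose CAf hCAf0 hCAf using hAc
  have hVc : ∃ Cn : ℝ, 0 ≤ Cn ∧ ∀ t ∈ Icc (0:ℝ) T, ∀ x, ∀ v : Fin n → Fin d,
      |iteratedFDeriv ℝ n (V t) x (fun i => EuclideanSpace.single (v i) 1)|
        ≤ Cn * jap x ^ (2*(M+1)) := by
    obtain ⟨C, hC⟩ := hVderiv n hn
    refine ⟨max C 0, le_max_right _ _, fun t ht x v => ?_⟩
    exact le_trans (hC t ht x v) (mul_le_mul_of_nonneg_right (le_max_left _ _)
      (le_of_lt (Real.rpow_pos_of_pos (jap_pos x) _)))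
  obtain ⟨CV, hCV0, hCV⟩ := hVc
  set CA' := max CA 0 with hCA'
  set CG0 := 1 + CA' with hCG0
  have hCG0' : (1:ℝ) ≤ CG0 := by
    have : (0:ℝ) ≤ CA' := le_max_right _ _
    rw [hCG0]; linarith
  set DC : ℕ → ℝ := fun s => max (Real.sqrt d * CAf s) 1 with hDC
  have hDC1 : ∀ s, (1:ℝ) ≤ DC s := fun s => le_max_right _ _
  have hDC0 : ∀ s, (0:ℝ) ≤ DC s := fun s => le_trans zero_le_one (hDC1 s)
  set K : OrderedFinpartition n → ℝ :=
    fun c => (1/m) * (max CG0 1)^2 * ∏ i, DC (c.partSize i) with hK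
  have hK0 : ∀ c, 0 ≤ K c := by
    intro c
    apply mul_nonneg (mul_nonneg (by positivity) (by positivity))
    exact Finset.prod_nonneg fun i _ => hDC0 _
  refine ⟨CV + ∑ c : OrderedFinpartition n, K c, by positivity, ?_⟩
  intro t ht q w
  set Λ : ℝ := jap q.2 ^ 2 + jap q.1 ^ (2*(M+1)) with hΛdef
  set S : ℝ := Real.sqrt Λ with hSdef
  set r : ℕ := (Finset.univ.filter fun i => (w i).isRight).card with hrdef
  have hΛ1 : 1 ≤ Λ := by
    have h1 := one_le_jap q.2
    have h2 : (0:ℝ) < jap q.1 ^ (2*(M+1)) := Real.rpow_pos_of_pos (jap_pos q.1) _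
    have h3 : 1 ≤ jap q.2 ^ 2 := by nlinarith
    simp only [hΛdef]; linarith
  have hΛ0 : (0:ℝ) < Λ := lt_of_lt_of_le one_pos hΛ1
  have hS1 : (1:ℝ) ≤ S := by
    rw [hSdef, show (1:ℝ) = Real.sqrt 1 by simp]
    exact Real.sqrt_le_sqrt hΛ1
  have hS0 : (0:ℝ) < S := lt_of_lt_of_le one_pos hS1
  have hSsq : S^2 = Λ := Real.sq_sqrt (le_of_lt hΛ0)
  have hSx : jap q.1 ^ (M+1) ≤ S := by
    rw [hSdef, Real.le_sqrt (le_of_lt (Real.rpow_pos_of_pos (jap_pos q.1) _)) (le_of_lt hΛ0)]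
    have : (jap q.1 ^ (M+1))^2 = jap q.1 ^ (2*(M+1)) := by
      rw [← Real.rpow_natCast (jap q.1 ^ (M+1)) 2, ← Real.rpow_mul (le_of_lt (jap_pos q.1))]
      congr 1
      push_cast
      ring
    rw [this]
    have : (0:ℝ) ≤ jap q.2 ^ 2 := by positivity
    simp only [hΛdef]; linarith
  have hSξ : jap q.2 ≤ S := by
    rw [hSdef, Real.le_sqrt (le_of_lt (jap_pos q.2)) (le_of_lt hΛ0)]
    have : (0:ℝ) < jap q.1 ^ (2*(M+1)) := Real.rpow_pos_of_pos (jap_pos q.1) _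
    simp only [hΛdef]; linarith
  have hAt : ContDiff ℝ (⊤:ℕ∞) (A t) := (hAsmooth t ht).of_le (by simp)
  have hVt : ContDiff ℝ (⊤:ℕ∞) (V t) := (hVsmooth t ht).of_le (by simp)
  set v : Fin n → E × E := fun i => pdir d (w i) with hvdef
  -- decomposition
  have hGt : ContDiff ℝ (⊤:ℕ∞) (fun p : E × E => p.2 - A t p.1) :=
    contDiff_snd.sub (hAt.comp contDiff_fst)
  have hQs : ContDiff ℝ (⊤:ℕ∞) (fun y : E => (1/(2*m)) * ‖y‖^2) := Qsmooth m
  have hQG : ContDiff ℝ (⊤:ℕ∞) (fun p : E × E => (1/(2*m)) * ‖p.2 - A t p.1‖^2) :=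
    hQs.comp hGt
  have hVf : ContDiff ℝ (⊤:ℕ∞) (fun p : E × E => V t p.1) := hVt.comp contDiff_fst
  have hfun : (fun p : E × E => μ + hcl m V A t p.1 p.2)
      = fun p : E × E => (fun _ : E × E => μ) p
          + ((fun p : E × E => (1/(2*m)) * ‖p.2 - A t p.1‖^2 + V t p.1) p) := by
    funext p; simp [hcl]
  rw [hfun, iteratedFDeriv_add_apply' contDiff_const.contDiffAt
    ((hQG.add hVf).of_le (by exact_mod_cast le_top)).contDiffAt]
  have hconst : iteratedFDeriv ℝ n (fun _ : E × E => μ) q = 0 := by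
    rw [iteratedFDeriv_const_of_ne (by omega)]; rfl
  rw [ContinuousMultilinearMap.add_apply, hconst]
  simp only [ContinuousMultilinearMap.zero_apply, zero_add]
  rw [iteratedFDeriv_add_apply' (hQG.of_le (by exact_mod_cast le_top)).contDiffAt
    (hVf.of_le (by exact_mod_cast le_top)).contDiffAt, ContinuousMultilinearMap.add_apply]
  have hpow0 : (0:ℝ) ≤ S ^ (2 - r) := by positivity
  -- V part
  have hVbound : ‖iteratedFDeriv ℝ n (fun p : E × E => V t p.1) q v‖ ≤ CV * S ^ (2 - r) := by
    rw [Vpart_iFD (V t) hVt q v]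
    by_cases hex : ∃ i, (w i).isRight = true
    · obtain ⟨i0, hi0⟩ := hex
      have h0 : (v i0).1 = 0 := by
        obtain ⟨j, hj⟩ := Sum.isRight_iff.mp hi0
        simp only [hvdef, hj]; rfl
      rw [ContinuousMultilinearMap.map_coord_zero _ i0 h0]
      simpa using mul_nonneg hCV0 hpow0
    · push_neg at hex
      have hr0 : r = 0 := by
        rw [hrdef, Finset.card_eq_zero, Finset.filter_eq_empty_iff]
        intro i _
        simpa using hex i
      have hvec : (fun i => (v i).1)
          = fun i => EuclideanSpace.single (Sum.elim id id (w i)) (1:ℝ) := by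
        funext i
        rcases hwi : w i with j | j
        · simp only [hvdef, hwi]; rfl
        · exact absurd (by rw [hwi]; rfl) (hex i)
      rw [hvec, hr0]
      calc ‖iteratedFDeriv ℝ n (V t) q.1 _‖
          ≤ CV * jap q.1 ^ (2*(M+1)) := by
            rw [Real.norm_eq_abs]; exact hCV t ht q.1 _
        _ ≤ CV * S ^ (2 - 0) := by
            apply mul_le_mul_of_nonneg_left _ hCV0
            have : (0:ℝ) ≤ jap q.2 ^ 2 := by positivity
            rw [show (2 - 0 : ℕ) = 2 from rfl, hSsq]
            simp only [hΛdef]; linarith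
  -- QG part
  have hGnorm : ‖q.2 - A t q.1‖ ≤ CG0 * S := by
    have h1 : ‖A t q.1‖ ≤ CA' * jap q.1 ^ (M+1) := by
      calc ‖A t q.1‖ ≤ CA * jap q.1 ^ (M+1-δ) := hAbd t ht q.1
        _ ≤ CA' * jap q.1 ^ (M+1-δ) := by
            apply mul_le_mul_of_nonneg_right (le_max_left _ _)
            exact le_of_lt (Real.rpow_pos_of_pos (jap_pos q.1) _)
        _ ≤ CA' * jap q.1 ^ (M+1) := by
            apply mul_le_mul_of_nonneg_left _ (le_max_right _ _)
            exact Real.rpow_le_rpow_of_exponent_le (one_le_jap q.1) (by linarith)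
    calc ‖q.2 - A t q.1‖ ≤ ‖q.2‖ + ‖A t q.1‖ := norm_sub_le _ _
      _ ≤ jap q.2 + CA' * jap q.1 ^ (M+1) := by
          apply add_le_add (norm_le_jap q.2) h1
      _ ≤ S + CA' * S := by
          apply add_le_add hSξ
          apply mul_le_mul_of_nonneg_left hSx (le_max_right _ _)
      _ = CG0 * S := by rw [hCG0]; ring
  have hQGbound : ‖iteratedFDeriv ℝ n (fun p : E × E => (1/(2*m)) * ‖p.2 - A t p.1‖^2) q v‖
      ≤ (∑ c : OrderedFinpartition n, K c) * S ^ (2 - r) := by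
    have hcompose : (fun p : E × E => (1/(2*m)) * ‖p.2 - A t p.1‖^2)
        = (fun y : E => (1/(2*m)) * ‖y‖^2) ∘ (fun p : E × E => p.2 - A t p.1) := rfl
    rw [hcompose, iteratedFDeriv_comp_faa hQs hGt n q, ContinuousMultilinearMap.sum_apply]
    refine le_trans (norm_sum_le _ _) ?_
    rw [Finset.sum_mul]
    apply Finset.sum_le_sum
    intro c _
    rw [FormalMultilinearSeries.compAlongOrderedFinpartition_apply]
    set U := c.applyOrderedFinpartition
      (fun i => ftaylorSeries ℝ (fun p : E × E => p.2 - A t p.1) q (c.partSize i)) v with hUdef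
    have hUi : ∀ i, U i = iteratedFDeriv ℝ (c.partSize i)
        (fun p : E × E => p.2 - A t p.1) q (fun j => pdir d (w (c.emb i j))) := fun i => rfl
    set rB : Fin c.length → ℕ :=
      (fun i => (Finset.univ.filter fun j => (w (c.emb i j)).isRight).card) with hrBdef
    have hrsum : ∑ i, rB i = r := by
      simp only [hrBdef, hrdef, Finset.card_filter]
      exact c.sum_sigma_eq_sum (fun j => if (w j).isRight = true then 1 else 0)
    have hps1 : ∀ i, 1 ≤ c.partSize i := fun i => c.partSize_pos i
    have hrB_le : ∀ i, rB i ≤ c.partSize i := by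
      intro i
      rw [hrBdef]
      exact le_trans (Finset.card_filter_le _ _) (by simp)
    have hblock := fun i => Gblock (hps1 i) (A t) hAt q (fun j => w (c.emb i j))
      (CAf (c.partSize i) * jap q.1 ^ (M+1))
      (mul_nonneg (hCAf0 _) (le_of_lt (Real.rpow_pos_of_pos (jap_pos q.1) _)))
      (fun vv j => hCAf (c.partSize i) (hps1 i) t ht q.1 vv j)
    have hklen : 1 ≤ c.length := c.length_pos (by omega)
    have hy : ftaylorSeries ℝ (fun y : E => (1/(2*m)) * ‖y‖^2) (q.2 - A t q.1) c.length
        = iteratedFDeriv ℝ c.length (fun y : E => (1/(2*m)) * ‖y‖^2) (q.2 - A t q.1) := rfl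
    rcases le_or_gt c.length 2 with hk2 | hk2
    · by_cases hbad : ∃ i, 1 ≤ rB i ∧ 2 ≤ c.partSize i
      · obtain ⟨i0, hi0r, hi0s⟩ := hbad
        have hU0 : U i0 = 0 := by
          rw [hUi i0]
          apply (hblock i0).2.1 _ hi0s
          have hne : (Finset.univ.filter fun j => (w (c.emb i0 j)).isRight = true).Nonempty := by
            rw [← Finset.card_pos]
            exact lt_of_lt_of_le one_pos hi0r
          obtain ⟨j, hj⟩ := hne
          exact ⟨j, (Finset.mem_filter.mp hj).2⟩
        rw [hy, ContinuousMultilinearMap.map_coord_zero _ i0 hU0]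
        simpa using mul_nonneg (hK0 c) hpow0
      · push_neg at hbad
        have hrB1 : ∀ i, rB i ≤ 1 := by
          intro i
          by_contra hcon
          have h1 : 1 ≤ rB i := by omega
          have h2 := hbad i h1
          have h3 := hrB_le i
          omega
        have hUb : ∀ i, ‖U i‖ ≤ DC (c.partSize i) * S ^ (1 - rB i) := by
          intro i
          by_cases hri : rB i = 0
          · have hall : ∀ j, ¬ (w (c.emb i j)).isRight = true := by
              intro j hcon
              have hpos : 0 < rB i := Finset.card_pos.mpr
                ⟨j, Finset.mem_filter.mpr ⟨Finset.mem_univ _, hcon⟩⟩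
              omega
            rw [hUi i]
            calc ‖_‖ ≤ Real.sqrt d * (CAf (c.partSize i) * jap q.1 ^ (M+1)) :=
                  (hblock i).1 hall
              _ ≤ DC (c.partSize i) * S ^ (1 - rB i) := by
                  rw [hri]
                  have h1 : Real.sqrt d * CAf (c.partSize i) ≤ DC (c.partSize i) :=
                    le_max_left _ _
                  have h2 : (0:ℝ) ≤ Real.sqrt d * CAf (c.partSize i) := by
                    apply mul_nonneg (Real.sqrt_nonneg _) (hCAf0 _)
                  calc Real.sqrt d * (CAf (c.partSize i) * jap q.1 ^ (M+1))
                      = (Real.sqrt d * CAf (c.partSize i)) * jap q.1 ^ (M+1) := by ring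
                    _ ≤ DC (c.partSize i) * S := by
                        apply mul_le_mul h1 hSx
                          (le_of_lt (Real.rpow_pos_of_pos (jap_pos q.1) _)) (hDC0 _)
                    _ = DC (c.partSize i) * S ^ (1 - 0) := by norm_num
          · have hri1 : rB i = 1 := by have := hrB1 i; omega
            have hps : c.partSize i = 1 := by
              have := hbad i (by omega)
              have := hps1 i
              omega
            have hexr : ∃ j, (w (c.emb i j)).isRight = true := by
              have hne : (Finset.univ.filter fun j => (w (c.emb i j)).isRight = true).Nonempty := by
                rw [← Finset.card_pos]
                show 0 < rB i
                omega
              obtain ⟨j, hj⟩ := hne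
              exact ⟨j, (Finset.mem_filter.mp hj).2⟩
            rw [hUi i]
            calc ‖_‖ ≤ 1 := (hblock i).2.2 hps hexr
              _ ≤ DC (c.partSize i) * S ^ (1 - rB i) := by
                  rw [hri1]
                  norm_num
                  exact hDC1 _
        -- assemble with Qbound
        rw [hy]
        calc ‖iteratedFDeriv ℝ c.length (fun y : E => (1/(2*m)) * ‖y‖^2) (q.2 - A t q.1) U‖
            ≤ (1/m) * ‖q.2 - A t q.1‖^(2-c.length) * ∏ i, ‖U i‖ := by
              rw [Real.norm_eq_abs]
              exact Qbound m hm hklen hk2 _ U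
          _ ≤ (1/m) * (CG0 * S)^(2-c.length)
              * ∏ i, (DC (c.partSize i) * S ^ (1 - rB i)) := by
              apply mul_le_mul
              · apply mul_le_mul_of_nonneg_left _ (by positivity)
                exact pow_le_pow_left₀ (norm_nonneg _) hGnorm _
              · apply Finset.prod_le_prod (fun i _ => norm_nonneg _) (fun i _ => hUb i)
              · exact Finset.prod_nonneg fun i _ => norm_nonneg _
              · positivity
          _ = (1/m) * CG0^(2-c.length) * (∏ i, DC (c.partSize i))
              * S^((2-c.length) + ∑ i, (1 - rB i)) := by
              rw [mul_pow, Finset.prod_mul_distrib, Finset.prod_pow_eq_pow_sum, pow_add]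
              ring
          _ ≤ K c * S ^ (2 - r) := by
              have hsum1 : (∑ i, (1 - rB i)) + ∑ i, rB i = c.length := by
                rw [← Finset.sum_add_distrib]
                calc ∑ i, (1 - rB i + rB i) = ∑ _i : Fin c.length, 1 :=
                      Finset.sum_congr rfl (fun i _ => by have := hrB1 i; omega)
                  _ = c.length := by simp
              have hrk : r ≤ c.length := by
                rw [← hrsum]
                calc ∑ i, rB i ≤ ∑ i, 1 := Finset.sum_le_sum fun i _ => hrB1 i
                  _ = c.length := by simp
              have hexp : (2-c.length) + ∑ i, (1 - rB i) = 2 - r := by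
                rw [hrsum] at hsum1
                omega
              rw [hexp, hK]
              apply mul_le_mul_of_nonneg_right _ hpow0
              apply mul_le_mul_of_nonneg_right _
                (Finset.prod_nonneg fun i _ => hDC0 _)
              apply mul_le_mul_of_nonneg_left _ (by positivity)
              calc CG0^(2-c.length) ≤ (max CG0 1)^(2-c.length) := by
                    apply pow_le_pow_left₀ (by linarith) (le_max_left _ _)
                _ ≤ (max CG0 1)^2 := by
                    apply pow_le_pow_right₀ (le_max_right _ _)
                    omega
    · -- c.length ≥ 3
      rw [hy, Q3 m hm (by omega)]
      simpa using mul_nonneg (hK0 c) hpow0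
  calc ‖iteratedFDeriv ℝ n (fun p : E × E => (1/(2*m)) * ‖p.2 - A t p.1‖^2) q v
        + iteratedFDeriv ℝ n (fun p : E × E => V t p.1) q v‖
      ≤ ‖iteratedFDeriv ℝ n (fun p : E × E => (1/(2*m)) * ‖p.2 - A t p.1‖^2) q v‖
        + ‖iteratedFDeriv ℝ n (fun p : E × E => V t p.1) q v‖ := norm_add_le _ _
    _ ≤ (∑ c : OrderedFinpartition n, K c) * S ^ (2 - r) + CV * S ^ (2 - r) := by
        exact add_le_add hQGbound hVbound
    _ = (CV + ∑ c : OrderedFinpartition n, K c) * S ^ (2 - r) := by ring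

end Stage1
end Stmt14Aux

open Stmt14Aux in
/-- **Estimate (3.21)** in the proof of Lemma 3.4: for `χ_ε = χ(ε(μ+h))`, every mixed
derivative `∂_ξ^{α+γ} ∂_x^β χ_ε` with `|γ| = 2` (i.e. at least two `ξ`-derivatives) is
bounded, uniformly in `0 < ε ≤ 1`, by `C_{αβ}·(⟨ξ⟩² + ⟨x⟩^{2(M+1)})^{-1}`. -/
theorem stmt14 (d : ℕ) (T m M : ℝ) (hT : 0 < T) (hm : 0 < m) (hM : 0 < M)
    (V : ℝ → EuclideanSpace ℝ (Fin d) → ℝ)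
    (A : ℝ → EuclideanSpace ℝ (Fin d) → EuclideanSpace ℝ (Fin d))
    (hVsmooth : ∀ t ∈ Icc (0:ℝ) T, ContDiff ℝ (⊤ : ℕ∞) (V t))
    (hAsmooth : ∀ t ∈ Icc (0:ℝ) T, ContDiff ℝ (⊤ : ℕ∞) (A t))
    (C0 C1 C2 CA δ : ℝ) (hC0 : 0 < C0) (hC1 : 0 ≤ C1) (hC2 : 0 < C2) (hδ : 0 < δ)
    (hVlow : ∀ t ∈ Icc (0:ℝ) T, ∀ x, C0 * jap x ^ (2*(M+1)) - C1 ≤ V t x)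
    (hVup : ∀ t ∈ Icc (0:ℝ) T, ∀ x, V t x ≤ C2 * jap x ^ (2*(M+1)))
    (hVderiv : ∀ n : ℕ, 1 ≤ n → ∃ C : ℝ, ∀ t ∈ Icc (0:ℝ) T, ∀ x, ∀ v : Fin n → Fin d,
      |iteratedFDeriv ℝ n (V t) x (fun i => EuclideanSpace.single (v i) 1)|
        ≤ C * jap x ^ (2*(M+1)))
    (hAbd : ∀ t ∈ Icc (0:ℝ) T, ∀ x, ‖A t x‖ ≤ CA * jap x ^ (M+1-δ))
    (hAderiv : ∀ n : ℕ, 1 ≤ n → ∃ C : ℝ, ∀ t ∈ Icc (0:ℝ) T, ∀ x,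
      ∀ v : Fin n → Fin d, ∀ j : Fin d,
      |iteratedFDeriv ℝ n (fun y => A t y j) x (fun i => EuclideanSpace.single (v i) 1)|
        ≤ C * jap x ^ (M+1))
    (μ c : ℝ) (hc : 0 < c)
    (hlow : ∀ t ∈ Icc (0:ℝ) T, ∀ x ξ : EuclideanSpace ℝ (Fin d),
      c * (jap ξ ^ 2 + jap x ^ (2*(M+1))) ≤ μ + hcl m V A t x ξ)
    (χ : SchwartzMap ℝ ℝ) :
    ∀ n : ℕ, ∃ C : ℝ, ∀ ε ∈ Ioc (0:ℝ) 1, ∀ t ∈ Icc (0:ℝ) T,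
      ∀ x ξ : EuclideanSpace ℝ (Fin d), ∀ dir : Fin n → Fin d ⊕ Fin d,
        2 ≤ (Finset.univ.filter fun i => (dir i).isRight).card →
        ‖iteratedFDeriv ℝ n
            (fun p : EuclideanSpace ℝ (Fin d) × EuclideanSpace ℝ (Fin d) =>
              χ (ε * (μ + hcl m V A t p.1 p.2))) (x, ξ) (fun i => pdir d (dir i))‖
          ≤ C * (jap ξ ^ 2 + jap x ^ (2*(M+1)))⁻¹ := by
  classical
  intro n
  -- stage-1 constants, per order k
  have hSt : ∀ k : ℕ, ∃ Ck : ℝ, 0 ≤ Ck ∧ (1 ≤ k → ∀ t ∈ Icc (0:ℝ) T,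
      ∀ q : EuclideanSpace ℝ (Fin d) × EuclideanSpace ℝ (Fin d),
      ∀ w : Fin k → Fin d ⊕ Fin d,
      ‖iteratedFDeriv ℝ k (fun p : EuclideanSpace ℝ (Fin d) × EuclideanSpace ℝ (Fin d) =>
          μ + hcl m V A t p.1 p.2) q (fun i => pdir d (w i))‖ ≤
        Ck * Real.sqrt (jap q.2 ^ 2 + jap q.1 ^ (2*(M+1))) ^
          (2 - (Finset.univ.filter fun i => (w i).isRight).card)) := by
    intro k
    by_cases hk : 1 ≤ k
    · obtain ⟨Ck, hCk0, hCk⟩ := stage1 T m M μ hm V A hVsmooth hAsmooth CA δ hδ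
        hVderiv hAbd hAderiv k hk
      exact ⟨Ck, hCk0, fun _ => hCk⟩
    · exact ⟨0, le_rfl, fun h => absurd h hk⟩
  choose CS hCS0 hCS using hSt
  have hχc : ∀ k : ℕ, ∃ Ck : ℝ, 0 < Ck ∧ ∀ s : ℝ,
      ‖s‖^k * ‖iteratedFDeriv ℝ k (⇑χ) s‖ ≤ Ck := fun k => χ.decay k k
  choose Cχ hCχ0 hCχ using hχc
  set K : OrderedFinpartition n → ℝ :=
    fun pt => Cχ pt.length * (1/c)^pt.length * ∏ i, CS (pt.partSize i) with hK
  have hK0 : ∀ pt, 0 ≤ K pt := by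
    intro pt
    apply mul_nonneg (mul_nonneg (le_of_lt (hCχ0 _)) (by positivity))
    exact Finset.prod_nonneg fun i _ => hCS0 _
  refine ⟨∑ pt : OrderedFinpartition n, K pt, ?_⟩
  intro ε hε t ht x ξ dir h2
  obtain ⟨hε0, hε1⟩ := hε
  set q : EuclideanSpace ℝ (Fin d) × EuclideanSpace ℝ (Fin d) := (x, ξ) with hqdef
  set Λ : ℝ := jap ξ ^ 2 + jap x ^ (2*(M+1)) with hΛdef
  set S : ℝ := Real.sqrt Λ with hSdef
  set r : ℕ := (Finset.univ.filter fun i => (dir i).isRight).card with hrdef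
  have hΛ1 : 1 ≤ Λ := by
    have h1 := one_le_jap ξ
    have hp : (0:ℝ) < jap x ^ (2*(M+1)) := Real.rpow_pos_of_pos (jap_pos x) _
    have h3 : 1 ≤ jap ξ ^ 2 := by nlinarith
    simp only [hΛdef]; linarith
  have hΛ0 : (0:ℝ) < Λ := lt_of_lt_of_le one_pos hΛ1
  have hΛne : Λ ≠ 0 := ne_of_gt hΛ0
  have hS1 : (1:ℝ) ≤ S := by
    rw [hSdef, show (1:ℝ) = Real.sqrt 1 by simp]
    exact Real.sqrt_le_sqrt hΛ1
  have hS0 : (0:ℝ) < S := lt_of_lt_of_le one_pos hS1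
  have hSsq : S^2 = Λ := Real.sq_sqrt (le_of_lt hΛ0)
  -- the inner function and its smoothness
  set g : EuclideanSpace ℝ (Fin d) × EuclideanSpace ℝ (Fin d) → ℝ :=
    fun p => μ + hcl m V A t p.1 p.2 with hgdef
  have hAt : ContDiff ℝ (⊤:ℕ∞) (A t) := (hAsmooth t ht).of_le (by simp)
  have hVt : ContDiff ℝ (⊤:ℕ∞) (V t) := (hVsmooth t ht).of_le (by simp)
  have hGt : ContDiff ℝ (⊤:ℕ∞)
      (fun p : EuclideanSpace ℝ (Fin d) × EuclideanSpace ℝ (Fin d) => p.2 - A t p.1) :=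
    contDiff_snd.sub (hAt.comp contDiff_fst)
  have hg : ContDiff ℝ (⊤:ℕ∞) g := by
    have h1 : ContDiff ℝ (⊤:ℕ∞)
        (fun p : EuclideanSpace ℝ (Fin d) × EuclideanSpace ℝ (Fin d) =>
          (1/(2*m)) * ‖p.2 - A t p.1‖^2) := (Qsmooth m).comp hGt
    have h2 : ContDiff ℝ (⊤:ℕ∞)
        (fun p : EuclideanSpace ℝ (Fin d) × EuclideanSpace ℝ (Fin d) => V t p.1) :=
      hVt.comp contDiff_fst
    exact contDiff_const.add (h1.add h2)
  set fε : EuclideanSpace ℝ (Fin d) × EuclideanSpace ℝ (Fin d) → ℝ :=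
    fun p => ε * g p with hfεdef
  have hfε : ContDiff ℝ (⊤:ℕ∞) fε := contDiff_const.mul hg
  have hglow : c * Λ ≤ g q := hlow t ht x ξ
  have hgpos : 0 < g q := lt_of_lt_of_le (by positivity) hglow
  have hfun : (fun p : EuclideanSpace ℝ (Fin d) × EuclideanSpace ℝ (Fin d) =>
      χ (ε * (μ + hcl m V A t p.1 p.2))) = ⇑χ ∘ fε := rfl
  rw [hfun, iteratedFDeriv_comp_faa (χ.smooth (⊤:ℕ∞)) hfε n q,
    ContinuousMultilinearMap.sum_apply]
  refine le_trans (norm_sum_le _ _) ?_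
  rw [Finset.sum_mul]
  apply Finset.sum_le_sum
  intro pt _
  set v : Fin n → EuclideanSpace ℝ (Fin d) × EuclideanSpace ℝ (Fin d) :=
    fun i => pdir d (dir i) with hvdef
  rw [FormalMultilinearSeries.compAlongOrderedFinpartition_apply]
  set s : ℝ := fε q with hsdef
  set U := pt.applyOrderedFinpartition
    (fun i => ftaylorSeries ℝ fε q (pt.partSize i)) v with hUdef
  set rB : Fin pt.length → ℕ :=
    (fun i => (Finset.univ.filter fun j => (dir (pt.emb i j)).isRight).card) with hrBdef
  have hrsum : ∑ i, rB i = r := by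
    simp only [hrBdef, hrdef, Finset.card_filter]
    exact pt.sum_sigma_eq_sum (fun j => if (dir j).isRight = true then 1 else 0)
  have hps1 : ∀ i, 1 ≤ pt.partSize i := fun i => pt.partSize_pos i
  have hrn : 2 ≤ n := by
    have : r ≤ n := by
      rw [hrdef]
      exact le_trans (Finset.card_filter_le _ _) (by simp)
    omega
  have hklen : 1 ≤ pt.length := pt.length_pos (by omega)
  -- block values
  have hUi : ∀ i, U i = ε • (iteratedFDeriv ℝ (pt.partSize i) g q
      (fun j => pdir d (dir (pt.emb i j)))) := by
    intro i
    have h1 : U i = iteratedFDeriv ℝ (pt.partSize i) fε q (v ∘ pt.emb i) := by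
      rw [hUdef]; rfl
    have h2 : iteratedFDeriv ℝ (pt.partSize i) fε q
        = ε • iteratedFDeriv ℝ (pt.partSize i) g q := by
      have heq : fε = fun p => ε • g p := rfl
      rw [heq]
      exact iteratedFDeriv_const_smul_apply' (hg.of_le (by exact_mod_cast le_top)).contDiffAt
    rw [h1, h2]
    rfl
  have hUb : ∀ i, ‖U i‖ ≤ ε * (CS (pt.partSize i) * S ^ (2 - rB i)) := by
    intro i
    rw [hUi i, norm_smul, Real.norm_eq_abs, abs_of_pos hε0]
    apply mul_le_mul_of_nonneg_left _ (le_of_lt hε0)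
    exact hCS (pt.partSize i) (hps1 i) t ht q (fun j => dir (pt.emb i j))
  -- outer bound
  have hsval : s = ε * g q := rfl
  have hsge : ε * (c * Λ) ≤ s := by
    rw [hsval]
    exact mul_le_mul_of_nonneg_left hglow (le_of_lt hε0)
  have hsD : (0:ℝ) < ε * (c * Λ) := by positivity
  have houter : ‖ftaylorSeries ℝ (⇑χ) s pt.length‖ ≤ Cχ pt.length / (ε * (c * Λ))^pt.length := by
    show ‖iteratedFDeriv ℝ pt.length (⇑χ) s‖ ≤ _
    have h1 := hCχ pt.length s
    have hsp : (0:ℝ) < s := lt_of_lt_of_le hsD hsge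
    have h2 : ‖iteratedFDeriv ℝ pt.length (⇑χ) s‖ ≤ Cχ pt.length / s^pt.length := by
      rw [le_div_iff₀ (by positivity : (0:ℝ) < s^pt.length)]
      calc ‖iteratedFDeriv ℝ pt.length (⇑χ) s‖ * s^pt.length
          = ‖s‖^pt.length * ‖iteratedFDeriv ℝ pt.length (⇑χ) s‖ := by
            rw [Real.norm_eq_abs, abs_of_pos hsp]; ring
        _ ≤ Cχ pt.length := h1
    refine le_trans h2 ?_
    gcongr
    exact le_of_lt (hCχ0 pt.length)
  -- exponent sum
  set σ : ℕ := ∑ i, (2 - rB i) with hσdef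
  have hmin : σ + ∑ i, min (rB i) 2 = 2 * pt.length := by
    rw [hσdef, ← Finset.sum_add_distrib]
    calc ∑ i, (2 - rB i + min (rB i) 2) = ∑ _i : Fin pt.length, 2 :=
          Finset.sum_congr rfl (fun i _ => by omega)
      _ = 2 * pt.length := by simp [mul_comm]
  have hminge : 2 ≤ ∑ i, min (rB i) 2 := by
    by_cases hex : ∃ i, 2 ≤ rB i
    · obtain ⟨i0, hi0⟩ := hex
      calc 2 = min (rB i0) 2 := by omega
        _ ≤ ∑ i, min (rB i) 2 :=
          Finset.single_le_sum (f := fun i => min (rB i) 2)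
            (fun i _ => Nat.zero_le _) (Finset.mem_univ i0)
    · push_neg at hex
      have heq : ∑ i, min (rB i) 2 = ∑ i, rB i :=
        Finset.sum_congr rfl (fun i _ => by have := hex i; omega)
      rw [heq, hrsum]
      exact h2
  have hσ2 : σ + 2 ≤ 2 * pt.length := by omega
  have hSσ : S ^ σ ≤ Λ^pt.length * Λ⁻¹ := by
    rw [le_mul_inv_iff₀ hΛ0]
    calc S ^ σ * Λ = S ^ (σ + 2) := by rw [pow_add, hSsq]
      _ ≤ S ^ (2 * pt.length) := pow_le_pow_right₀ hS1 hσ2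
      _ = Λ ^ pt.length := by rw [pow_mul, hSsq]
  -- put everything together
  have hfin : (0:ℝ) ≤ ∏ i, CS (pt.partSize i) := Finset.prod_nonneg fun i _ => hCS0 _
  refine le_trans (ContinuousMultilinearMap.le_opNorm _ _) ?_
  calc ‖ftaylorSeries ℝ (⇑χ) s pt.length‖ * ∏ i, ‖U i‖
      ≤ (Cχ pt.length / (ε * (c * Λ))^pt.length)
          * ∏ i, (ε * (CS (pt.partSize i) * S ^ (2 - rB i))) := by
        apply mul_le_mul houter
          (Finset.prod_le_prod (fun i _ => norm_nonneg _) (fun i _ => hUb i))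
          (Finset.prod_nonneg fun i _ => norm_nonneg _)
          (div_nonneg (le_of_lt (hCχ0 pt.length)) (by positivity))
    _ = Cχ pt.length * ((∏ i, CS (pt.partSize i)) * S ^ σ) / ((c * Λ)^pt.length) := by
        rw [Finset.prod_mul_distrib, Finset.prod_const, Finset.prod_mul_distrib,
          Finset.prod_pow_eq_pow_sum, mul_pow]
        simp only [Finset.card_univ, Fintype.card_fin, ← hσdef]
        field_simp
    _ ≤ Cχ pt.length * ((∏ i, CS (pt.partSize i)) * (Λ^pt.length * Λ⁻¹))
          / ((c * Λ)^pt.length) := by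
        gcongr
        exact le_of_lt (hCχ0 pt.length)
    _ = K pt * Λ⁻¹ := by
        rw [hK, mul_pow]
        have hcne : c ≠ 0 := ne_of_gt hc
        field_simp
        ring_nf
        rw [mul_assoc, ← mul_pow, mul_inv_cancel₀ hcne, one_pow, mul_one]
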